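/- arXiv:2505.04338 — 5 statements merged into one kernel-verified Lean document; each statement's English description precedes it below -/
import Mathlib

section
/- Let P(x) be the orthogonal projection onto the tangent space T_xM as given by P_{ij}(x) = δ_{ij} − Σ_{α,α'} ∂ᵢξ_α(x) (∇ξᵀ∇ξ)⁻¹_{αα'}(x) ∂ⱼξ_{α'}(x), and let v ∈ T_xM so that Σᵢ ∂ᵢξ_α(x)vᵢ = 0 for all α. Then for every index r, Σ_{i,i'} ∂ᵣP_{ii'}(x) vᵢ vᵢ' = 0. -/
open Matrix

noncomputable def pd {n : ℕ} (r : Fin n) (f : (Fin n → ℝ) → ℝ) (x : Fin n → ℝ) : ℝ :=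
  fderiv ℝ f x (Pi.single r 1)

noncomputable def Jac {n m : ℕ} (ξ : (Fin n → ℝ) → Fin m → ℝ) (x : Fin n → ℝ) :
    Matrix (Fin n) (Fin m) ℝ :=
  Matrix.of fun i α => pd i (fun y => ξ y α) x

noncomputable def Pmat {n m : ℕ} (ξ : (Fin n → ℝ) → Fin m → ℝ) (x : Fin n → ℝ) :
    Matrix (Fin n) (Fin n) ℝ :=
  1 - Jac ξ x * ((Jac ξ x)ᵀ * Jac ξ x)⁻¹ * (Jac ξ x)ᵀ

private lemma diffAt_finset_prod {E : Type*} [NormedAddCommGroup E] [NormedSpace ℝ E]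
    {ι : Type*} (u : Finset ι) (f : ι → E → ℝ) {x : E}
    (h : ∀ i ∈ u, DifferentiableAt ℝ (f i) x) :
    DifferentiableAt ℝ (fun y => ∏ i ∈ u, f i y) x := by
  classical
  revert h
  induction u using Finset.induction_on with
  | empty => intro _; simpa using differentiableAt_const (1 : ℝ)
  | insert a s hni ih =>
    intro h
    simp only [Finset.prod_insert hni]
    exact (h _ (Finset.mem_insert_self _ _)).mul
      (ih fun i hi => h i (Finset.mem_insert_of_mem hi))

private lemma diffAt_det {E : Type*} [NormedAddCommGroup E] [NormedSpace ℝ E]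
    {k : ℕ} {M : E → Matrix (Fin k) (Fin k) ℝ} {x : E}
    (h : ∀ a b, DifferentiableAt ℝ (fun y => M y a b) x) :
    DifferentiableAt ℝ (fun y => (M y).det) x := by
  simp only [Matrix.det_apply, Units.smul_def, zsmul_eq_mul]
  exact DifferentiableAt.fun_sum fun σ _ =>
    (differentiableAt_const _).mul (diffAt_finset_prod _ _ fun i _ => h (σ i) i)

theorem first_derivative_projection_quadratic_form_vanishes {n m : ℕ}
    (ξ : (Fin n → ℝ) → Fin m → ℝ) (x : Fin n → ℝ)
    (hξ : ContDiff ℝ 2 ξ)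
    (hrank : IsUnit ((Jac ξ x)ᵀ * Jac ξ x).det)
    (v : Fin n → ℝ) (hv : ∀ α, ∑ i, Jac ξ x i α * v i = 0) :
    ∀ r, ∑ i, ∑ i', pd r (fun y => Pmat ξ y i i') x * v i * v i' = 0 := by
  classical
  intro r
  -- differentiability of Jacobian entries
  have hJ : ∀ i α, Differentiable ℝ (fun y => Jac ξ y i α) := by
    intro i α
    have hcomp : ContDiff ℝ 2 (fun y => ξ y α) := (contDiff_pi.mp hξ) α
    have h1 : ContDiff ℝ 1 (fun y => fderiv ℝ (fun z => ξ z α) y (Pi.single i 1)) :=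
      (hcomp.fderiv_right (by norm_num)).clm_apply contDiff_const
    simpa [Jac, pd] using h1.differentiable one_ne_zero
  -- Gram matrix entries
  have hG : ∀ α β, DifferentiableAt ℝ (fun y => ((Jac ξ y)ᵀ * Jac ξ y) α β) x := by
    intro α β
    simp only [Matrix.mul_apply, Matrix.transpose_apply]
    exact DifferentiableAt.fun_sum fun i _ => ((hJ i α) x).mul ((hJ i β) x)
  have hdet : DifferentiableAt ℝ (fun y => ((Jac ξ y)ᵀ * Jac ξ y).det) x := diffAt_det hG
  have hdetne : ((Jac ξ x)ᵀ * Jac ξ x).det ≠ 0 := isUnit_iff_ne_zero.mp hrank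
  have hGinv : ∀ α β, DifferentiableAt ℝ (fun y => ((Jac ξ y)ᵀ * Jac ξ y)⁻¹ α β) x := by
    intro α β
    have heq : (fun y => ((Jac ξ y)ᵀ * Jac ξ y)⁻¹ α β)
        = fun y => (((Jac ξ y)ᵀ * Jac ξ y).det)⁻¹ *
            ((Jac ξ y)ᵀ * Jac ξ y).adjugate α β := by
      funext y
      rw [Matrix.inv_def]
      simp [Ring.inverse_eq_inv', smul_eq_mul]
    rw [heq]
    refine (hdet.inv hdetne).mul ?_
    have hadj : (fun y => ((Jac ξ y)ᵀ * Jac ξ y).adjugate α β)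
        = fun y => (((Jac ξ y)ᵀ * Jac ξ y).updateRow β (Pi.single α 1)).det := by
      funext y; rw [Matrix.adjugate_apply]
    rw [hadj]
    refine diffAt_det ?_
    intro a b
    by_cases hab : a = β
    · simp [Matrix.updateRow_apply, hab]
    · simpa [Matrix.updateRow_apply, hab] using hG a b
  -- entrywise formula for Pmat and differentiability
  have hPentry : ∀ (y : Fin n → ℝ) (i i' : Fin n), Pmat ξ y i i'
      = (1 : Matrix (Fin n) (Fin n) ℝ) i i'
        - ∑ β, (∑ α, Jac ξ y i α * ((Jac ξ y)ᵀ * Jac ξ y)⁻¹ α β) * Jac ξ y i' β := by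
    intro y i i'
    simp [Pmat, Matrix.sub_apply, Matrix.mul_apply, Matrix.transpose_apply]
  have hP : ∀ i i', DifferentiableAt ℝ (fun y => Pmat ξ y i i') x := by
    intro i i'
    have heq : (fun y => Pmat ξ y i i') = fun y => (1 : Matrix (Fin n) (Fin n) ℝ) i i'
        - ∑ β, (∑ α, Jac ξ y i α * ((Jac ξ y)ᵀ * Jac ξ y)⁻¹ α β) * Jac ξ y i' β := by
      funext y; exact hPentry y i i'
    rw [heq]
    exact (differentiableAt_const _).sub (DifferentiableAt.fun_sum fun β _ =>
      (DifferentiableAt.fun_sum fun α _ => ((hJ i α) x).mul (hGinv α β)).mul ((hJ i' β) x))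
  -- step A : move the sums inside the derivative
  have stepA : ∑ i, ∑ i', pd r (fun y => Pmat ξ y i i') x * v i * v i'
      = pd r (fun y => ∑ i, ∑ i', Pmat ξ y i i' * v i * v i') x := by
    unfold pd
    rw [fderiv_fun_sum (fun i _ => DifferentiableAt.fun_sum fun i' _ =>
      ((hP i i').mul_const (v i)).mul_const (v i'))]
    simp only [ContinuousLinearMap.sum_apply]
    refine Finset.sum_congr rfl fun i _ => ?_
    rw [fderiv_fun_sum (fun i' _ => ((hP i i').mul_const (v i)).mul_const (v i'))]
    simp only [ContinuousLinearMap.sum_apply]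
    refine Finset.sum_congr rfl fun i' _ => ?_
    have heq : (fun y => Pmat ξ y i i' * v i * v i')
        = fun y => Pmat ξ y i i' * (v i * v i') := by funext y; ring
    rw [heq, fderiv_mul_const (hP i i') (v i * v i')]
    simp only [ContinuousLinearMap.smul_apply, smul_eq_mul]
    ring
  -- step B : algebraic identity
  have keyfun : (fun y => ∑ i, ∑ i', Pmat ξ y i i' * v i * v i')
      = fun y => (∑ i, v i * v i) - ∑ α, (∑ i, Jac ξ y i α * v i) *
          (∑ β, ((Jac ξ y)ᵀ * Jac ξ y)⁻¹ α β * (∑ i', Jac ξ y i' β * v i')) := by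
    funext y
    have h1 : ∑ i, ∑ i', Pmat ξ y i i' * v i * v i' = v ⬝ᵥ (Pmat ξ y *ᵥ v) := by
      simp only [dotProduct, Matrix.mulVec, Finset.mul_sum]
      exact Finset.sum_congr rfl fun i _ => Finset.sum_congr rfl fun i' _ => by ring
    have h2 : v ⬝ᵥ (Pmat ξ y *ᵥ v) = v ⬝ᵥ v -
        ((Jac ξ y)ᵀ *ᵥ v) ⬝ᵥ (((Jac ξ y)ᵀ * Jac ξ y)⁻¹ *ᵥ ((Jac ξ y)ᵀ *ᵥ v)) := by
      rw [Pmat, Matrix.sub_mulVec, Matrix.one_mulVec, dotProduct_sub]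
      congr 1
      rw [← Matrix.mulVec_mulVec, ← Matrix.mulVec_mulVec, Matrix.dotProduct_mulVec,
        Matrix.mulVec_transpose]
    rw [h1, h2]
    congr 1
  -- step C : the derivative vanishes at x
  have hbig : HasFDerivAt (fun y => (∑ i, v i * v i) - ∑ α, (∑ i, Jac ξ y i α * v i) *
      (∑ β, ((Jac ξ y)ᵀ * Jac ξ y)⁻¹ α β * (∑ i', Jac ξ y i' β * v i')))
      (0 : (Fin n → ℝ) →L[ℝ] ℝ) x := by
    have hterm : ∀ α : Fin m, HasFDerivAt (fun y => (∑ i, Jac ξ y i α * v i) *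
        (∑ β, ((Jac ξ y)ᵀ * Jac ξ y)⁻¹ α β * (∑ i', Jac ξ y i' β * v i')))
        (0 : (Fin n → ℝ) →L[ℝ] ℝ) x := by
      intro α
      have hAd : DifferentiableAt ℝ (fun y => ∑ i, Jac ξ y i α * v i) x :=
        DifferentiableAt.fun_sum fun i _ => ((hJ i α) x).mul_const _
      have hBd : DifferentiableAt ℝ
          (fun y => ∑ β, ((Jac ξ y)ᵀ * Jac ξ y)⁻¹ α β * (∑ i', Jac ξ y i' β * v i')) x :=
        DifferentiableAt.fun_sum fun β _ => (hGinv α β).mul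
          (DifferentiableAt.fun_sum fun i' _ => ((hJ i' β) x).mul_const _)
      have h := hAd.hasFDerivAt.fun_mul hBd.hasFDerivAt
      simpa only [hv, mul_zero, Finset.sum_const_zero, zero_smul, zero_add, add_zero,
        smul_zero] using h
    have hs : HasFDerivAt (fun y => ∑ α, (∑ i, Jac ξ y i α * v i) *
        (∑ β, ((Jac ξ y)ᵀ * Jac ξ y)⁻¹ α β * (∑ i', Jac ξ y i' β * v i')))
        (∑ _α : Fin m, (0 : (Fin n → ℝ) →L[ℝ] ℝ)) x :=
      HasFDerivAt.fun_sum fun α _ => hterm α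
    have h := (hasFDerivAt_const (∑ i, v i * v i) x).fun_sub hs
    simpa using h
  rw [stepA]
  unfold pd
  rw [keyfun, hbig.fderiv]
  simp
end

section
/- Under the same setup, for v ∈ T_xM: Σ_{i,i',r,r'} ∂²_{rr'}P_{ii'}(x) vᵢvᵢ'vᵣvᵣ' = −2 Σ_{i,i',r,r'} Σ_{α,α'} ∂²_{ir}ξ_α(x) (∇ξᵀ∇ξ)⁻¹_{αα'}(x) ∂²_{i'r'}ξ_{α'}(x) vᵢvᵢ'vᵣvᵣ'. -/
open Matrix

noncomputable def pd2 {n : ℕ} (r r' : Fin n) (f : (Fin n → ℝ) → ℝ) (x : Fin n → ℝ) : ℝ :=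
  pd r (fun y => pd r' f y) x

/-! ### Auxiliary definitions -/

open Topology

noncomputable def bFun {n m : ℕ} (ξ : (Fin n → ℝ) → Fin m → ℝ) (α α' : Fin m)
    (y : Fin n → ℝ) : ℝ :=
  (((Jac ξ y)ᵀ * Jac ξ y).det)⁻¹ * adjugate ((Jac ξ y)ᵀ * Jac ξ y) α α'

noncomputable def WFun {n m : ℕ} (ξ : (Fin n → ℝ) → Fin m → ℝ) (v : Fin n → ℝ)
    (α : Fin m) (y : Fin n → ℝ) : ℝ :=
  ∑ i, v i * Jac ξ y i α

/-! ### Calculus lemmas -/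

section calc_lemmas
variable {n : ℕ} {x v : Fin n → ℝ}

lemma fderiv_eq_sum_pd {f : (Fin n → ℝ) → ℝ} :
    fderiv ℝ f x v = ∑ r, v r * pd r f x := by
  conv_lhs => rw [← Finset.univ_sum_single v]
  rw [map_sum]
  refine Finset.sum_congr rfl fun r _ => ?_
  have : Pi.single r (v r) = v r • (Pi.single r 1 : Fin n → ℝ) := by
    simp [← Pi.single_smul]
  rw [this, _root_.map_smul, smul_eq_mul]
  rfl

lemma hD1 {f : (Fin n → ℝ) → ℝ} (hf : ContDiffAt ℝ 2 f x) (w : Fin n → ℝ) :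
    DifferentiableAt ℝ (fun y => fderiv ℝ f y w) x :=
  (((hf.fderiv_right (m := 1) (by norm_num)).differentiableAt one_ne_zero)).clm_apply
    (differentiableAt_const _)

lemma sum_pd2_eq_D2 {f : (Fin n → ℝ) → ℝ} (hf : ContDiffAt ℝ 2 f x) :
    ∑ r, ∑ r', pd2 r r' f x * v r * v r' =
      fderiv ℝ (fun y => fderiv ℝ f y v) x v := by
  have hd : DifferentiableAt ℝ (fderiv ℝ f) x :=
    (hf.fderiv_right (m := 1) (by norm_num)).differentiableAt one_ne_zero
  have hpd2 : ∀ r r' : Fin n, pd2 r r' f x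
      = fderiv ℝ (fderiv ℝ f) x (Pi.single r 1) (Pi.single r' 1) := by
    intro r r'
    show fderiv ℝ (fun y => fderiv ℝ f y (Pi.single r' 1)) x (Pi.single r 1) = _
    rw [fderiv_clm_apply hd (differentiableAt_const _)]
    simp
  have hD2 : fderiv ℝ (fun y => fderiv ℝ f y v) x v = fderiv ℝ (fderiv ℝ f) x v v := by
    rw [fderiv_clm_apply hd (differentiableAt_const _)]
    simp
  rw [hD2]
  have hv' : ∀ (L : (Fin n → ℝ) →L[ℝ] ℝ), L v = ∑ r, v r * L (Pi.single r 1) := by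
    intro L
    conv_lhs => rw [← Finset.univ_sum_single v]
    rw [map_sum]
    refine Finset.sum_congr rfl fun r _ => ?_
    have : Pi.single r (v r) = v r • (Pi.single r 1 : Fin n → ℝ) := by
      simp [← Pi.single_smul]
    rw [this, _root_.map_smul, smul_eq_mul]
  have h1 : fderiv ℝ (fderiv ℝ f) x v v
      = ∑ r, v r * (fderiv ℝ (fderiv ℝ f) x (Pi.single r 1) v) := by
    have := hv' ((fderiv ℝ (fderiv ℝ f) x).flip v)
    simpa using this
  rw [h1]
  refine Finset.sum_congr rfl fun r _ => ?_
  rw [hv' (fderiv ℝ (fderiv ℝ f) x (Pi.single r 1)), Finset.mul_sum]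
  refine Finset.sum_congr rfl fun r' _ => ?_
  rw [hpd2]; ring

lemma fderiv2_comb {ι : Type*} (t : Finset ι) (C : ℝ) (c : ι → ℝ)
    (f : ι → (Fin n → ℝ) → ℝ) (h : ∀ j ∈ t, ContDiffAt ℝ 2 (f j) x) (w w' : Fin n → ℝ) :
    fderiv ℝ (fun y => fderiv ℝ (fun z => C + ∑ j ∈ t, c j * f j z) y w') x w
      = ∑ j ∈ t, c j * fderiv ℝ (fun y => fderiv ℝ (f j) y w') x w := by
  have hev : ∀ᶠ y in 𝓝 x, ∀ j ∈ t, ContDiffAt ℝ 2 (f j) y := by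
    rw [Filter.eventually_all_finset]
    exact fun j hj => (h j hj).eventually (by simp)
  have h1 : (fun y => fderiv ℝ (fun z => C + ∑ j ∈ t, c j * f j z) y w')
      =ᶠ[𝓝 x] fun y => ∑ j ∈ t, c j * fderiv ℝ (f j) y w' := by
    filter_upwards [hev] with y hy
    rw [fderiv_const_add,
      fderiv_fun_sum (fun j hj => ((hy j hj).differentiableAt two_ne_zero).const_mul (c j))]
    simp only [ContinuousLinearMap.sum_apply]
    refine Finset.sum_congr rfl fun j hj => ?_
    rw [fderiv_const_mul ((hy j hj).differentiableAt two_ne_zero)]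
    simp
  rw [h1.fderiv_eq, fderiv_fun_sum (fun j hj => ((hD1 (h j hj) w').const_mul (c j)))]
  simp only [ContinuousLinearMap.sum_apply]
  refine Finset.sum_congr rfl fun j hj => ?_
  rw [fderiv_const_mul (hD1 (h j hj) w')]
  simp

lemma fderiv2_mul {u w : (Fin n → ℝ) → ℝ} (hu : ContDiffAt ℝ 2 u x) (hw : ContDiffAt ℝ 2 w x) :
    fderiv ℝ (fun y => fderiv ℝ (fun z => u z * w z) y v) x v
      = fderiv ℝ (fun y => fderiv ℝ u y v) x v * w x
        + 2 * (fderiv ℝ u x v * fderiv ℝ w x v)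
        + u x * fderiv ℝ (fun y => fderiv ℝ w y v) x v := by
  have hev : ∀ᶠ y in 𝓝 x, DifferentiableAt ℝ u y ∧ DifferentiableAt ℝ w y := by
    filter_upwards [hu.eventually (by simp), hw.eventually (by simp)] with y h1 h2
    exact ⟨h1.differentiableAt two_ne_zero, h2.differentiableAt two_ne_zero⟩
  have h1 : (fun y => fderiv ℝ (fun z => u z * w z) y v)
      =ᶠ[𝓝 x] fun y => u y * fderiv ℝ w y v + w y * fderiv ℝ u y v := by
    filter_upwards [hev] with y hy
    rw [fderiv_fun_mul hy.1 hy.2]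
    simp
  have hux : DifferentiableAt ℝ u x := hu.differentiableAt two_ne_zero
  have hwx : DifferentiableAt ℝ w x := hw.differentiableAt two_ne_zero
  rw [h1.fderiv_eq, fderiv_fun_add (hux.fun_mul (hD1 hw v)) (hwx.fun_mul (hD1 hu v))]
  rw [ContinuousLinearMap.add_apply, fderiv_fun_mul hux (hD1 hw v), fderiv_fun_mul hwx (hD1 hu v)]
  simp only [ContinuousLinearMap.add_apply, ContinuousLinearMap.smul_apply, smul_eq_mul]
  ring

lemma fderiv2_mul3 {p q s : (Fin n → ℝ) → ℝ} (hp : ContDiffAt ℝ 2 p x)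
    (hq : ContDiffAt ℝ 2 q x) (hs : ContDiffAt ℝ 2 s x)
    (hp0 : p x = 0) (hs0 : s x = 0) :
    fderiv ℝ (fun y => fderiv ℝ (fun z => p z * q z * s z) y v) x v
      = 2 * (fderiv ℝ p x v * q x * fderiv ℝ s x v) := by
  have hpq : ContDiffAt ℝ 2 (fun z => p z * q z) x := hp.mul hq
  have h := fderiv2_mul (v := v) hpq hs
  have h2 : fderiv ℝ (fun z => p z * q z) x v = q x * fderiv ℝ p x v := by
    rw [fderiv_fun_mul (hp.differentiableAt two_ne_zero) (hq.differentiableAt two_ne_zero)]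
    simp [hp0]
  rw [h, h2, hp0, hs0]
  ring

lemma reorder6 {m : ℕ} (g : Fin n → Fin n → Fin n → Fin n → Fin m → Fin m → ℝ) :
    ∑ i, ∑ i', ∑ r, ∑ r', ∑ α, ∑ α', g i i' r r' α α'
    = ∑ α, ∑ α', ∑ i', ∑ r', ∑ i, ∑ r, g i i' r r' α α' := by
  conv_lhs => enter [2, i, 2, i', 2, r]; rw [Finset.sum_comm]
  conv_lhs => enter [2, i, 2, i']; rw [Finset.sum_comm]
  conv_lhs => enter [2, i]; rw [Finset.sum_comm]
  conv_lhs => rw [Finset.sum_comm]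
  conv_lhs => enter [2, a, 2, b, 2, c, 2, d]; rw [Finset.sum_comm]
  conv_lhs => enter [2, a, 2, b, 2, c]; rw [Finset.sum_comm]
  conv_lhs => enter [2, a, 2, b]; rw [Finset.sum_comm]
  conv_lhs => enter [2, a]; rw [Finset.sum_comm]
  conv_lhs => enter [2, a, 2, b, 2, c]; rw [Finset.sum_comm]
  conv_lhs => enter [2, a, 2, b, 2, c]; rw [Finset.sum_comm]
  conv_lhs => enter [2, a, 2, b]; rw [Finset.sum_comm]
  conv_lhs => enter [2, a, 2, b, 2, c, 2, d]; rw [Finset.sum_comm]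
  conv_lhs => enter [2, a, 2, b, 2, c]; rw [Finset.sum_comm]

end calc_lemmas

/-! ### Smoothness and algebra lemmas -/

section smooth
variable {n m : ℕ} {ξ : (Fin n → ℝ) → Fin m → ℝ} {x : Fin n → ℝ}

lemma jac_entry_contDiff (hξ : ContDiff ℝ 3 ξ)
    (i : Fin n) (α : Fin m) : ContDiff ℝ 2 (fun y => Jac ξ y i α) := by
  have hcomp : ContDiff ℝ 3 (fun y => ξ y α) :=
    (ContinuousLinearMap.proj α (R := ℝ) (φ := fun _ : Fin m => ℝ)).contDiff.comp hξ
  have h1 : ContDiff ℝ 2 (fderiv ℝ fun y => ξ y α) := hcomp.fderiv_right (by norm_num)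
  exact h1.clm_apply contDiff_const

lemma contDiffAt_det_of_entries {k : ℕ} {M : (Fin n → ℝ) → Matrix (Fin k) (Fin k) ℝ}
    (h : ∀ a b, ContDiffAt ℝ 2 (fun y => M y a b) x) :
    ContDiffAt ℝ 2 (fun y => (M y).det) x := by
  simp only [Matrix.det_apply']
  apply ContDiffAt.sum
  intro σ _
  exact (contDiffAt_const (c := (Equiv.Perm.sign σ : ℝ))).mul
    (contDiffAt_prod fun a _ => h (σ a) a)

lemma gram_entry_contDiff (hξ : ContDiff ℝ 3 ξ) (α β : Fin m) :
    ContDiff ℝ 2 (fun y => ((Jac ξ y)ᵀ * Jac ξ y) α β) := by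
  simp only [Matrix.mul_apply, Matrix.transpose_apply]
  exact ContDiff.sum fun i _ =>
    (jac_entry_contDiff hξ i α).mul (jac_entry_contDiff hξ i β)

lemma bFun_contDiffAt (hξ : ContDiff ℝ 3 ξ)
    (hrank : IsUnit ((Jac ξ x)ᵀ * Jac ξ x).det) (α α' : Fin m) :
    ContDiffAt ℝ 2 (bFun ξ α α') x := by
  have hdet : ContDiffAt ℝ 2 (fun y => ((Jac ξ y)ᵀ * Jac ξ y).det) x :=
    contDiffAt_det_of_entries fun a b => (gram_entry_contDiff hξ a b).contDiffAt
  have hdet0 : ((Jac ξ x)ᵀ * Jac ξ x).det ≠ 0 := by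
    simpa [isUnit_iff_ne_zero] using hrank
  have hadj : ContDiffAt ℝ 2 (fun y => adjugate ((Jac ξ y)ᵀ * Jac ξ y) α α') x := by
    simp only [Matrix.adjugate_apply]
    apply contDiffAt_det_of_entries
    intro a b
    by_cases hab : a = α'
    · simp only [hab, Matrix.updateRow_self]
      exact contDiffAt_const
    · simp only [Matrix.updateRow_ne hab]
      exact (gram_entry_contDiff hξ a b).contDiffAt
  exact (hdet.inv hdet0).mul hadj

lemma bFun_eq_inv (y : Fin n → ℝ) (α α' : Fin m) :
    ((Jac ξ y)ᵀ * Jac ξ y)⁻¹ α α' = bFun ξ α α' y := by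
  rw [Matrix.inv_def, Matrix.smul_apply, Ring.inverse_eq_inv', smul_eq_mul]
  rfl

lemma Pmat_entry (y : Fin n → ℝ) (i i' : Fin n) :
    Pmat ξ y i i' = (if i = i' then 1 else 0)
      - ∑ α', (∑ α, Jac ξ y i α * bFun ξ α α' y) * Jac ξ y i' α' := by
  rw [Pmat, Matrix.sub_apply, Matrix.one_apply]
  congr 1
  rw [Matrix.mul_apply]
  refine Finset.sum_congr rfl fun α' _ => ?_
  rw [Matrix.transpose_apply, Matrix.mul_apply]
  congr 1
  refine Finset.sum_congr rfl fun α _ => ?_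
  rw [bFun_eq_inv]

lemma Pmat_entry_contDiffAt (hξ : ContDiff ℝ 3 ξ)
    (hrank : IsUnit ((Jac ξ x)ᵀ * Jac ξ x).det) (i i' : Fin n) :
    ContDiffAt ℝ 2 (fun y => Pmat ξ y i i') x := by
  simp only [Pmat_entry]
  apply ContDiffAt.sub contDiffAt_const
  apply ContDiffAt.sum
  intro α' _
  refine ContDiffAt.mul (ContDiffAt.sum fun α _ => ?_) (jac_entry_contDiff hξ i' α').contDiffAt
  exact (jac_entry_contDiff hξ i α).contDiffAt.mul (bFun_contDiffAt hξ hrank α α')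

lemma WFun_contDiff (hξ : ContDiff ℝ 3 ξ) (v : Fin n → ℝ) (α : Fin m) :
    ContDiff ℝ 2 (WFun ξ v α) :=
  ContDiff.sum fun i _ => contDiff_const.mul (jac_entry_contDiff hξ i α)

end smooth

theorem second_derivative_projection_quartic_form {n m : ℕ}
    (ξ : (Fin n → ℝ) → Fin m → ℝ) (x : Fin n → ℝ)
    (hξ : ContDiff ℝ 3 ξ) (hx : ξ x = 0)
    (hrank : IsUnit ((Jac ξ x)ᵀ * Jac ξ x).det)
    (v : Fin n → ℝ) (hv : (Jac ξ x)ᵀ.mulVec v = 0) :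
    ∑ i, ∑ i', ∑ r, ∑ r',
        pd2 r r' (fun y => Pmat ξ y i i') x * v i * v i' * v r * v r' =
      -2 * ∑ i, ∑ i', ∑ r, ∑ r', ∑ α, ∑ α',
        pd2 i r (fun y => ξ y α) x * ((Jac ξ x)ᵀ * Jac ξ x)⁻¹ α α' *
          pd2 i' r' (fun y => ξ y α') x * v i * v i' * v r * v r' := by
  classical
  have hW0 : ∀ α, WFun ξ v α x = 0 := by
    intro α
    have h := congrFun hv α
    simp only [Matrix.mulVec, dotProduct, Matrix.transpose_apply, Pi.zero_apply] at h
    simpa [WFun, mul_comm] using h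
  have hb2 : ∀ α α' : Fin m, ContDiffAt ℝ 2 (bFun ξ α α') x :=
    fun α α' => bFun_contDiffAt hξ hrank α α'
  have hW2 : ∀ α : Fin m, ContDiffAt ℝ 2 (WFun ξ v α) x :=
    fun α => (WFun_contDiff hξ v α).contDiffAt
  -- directional derivative of the contracted Jacobian
  have hdW : ∀ α : Fin m, fderiv ℝ (WFun ξ v α) x v
      = ∑ i, ∑ r, v i * v r * pd2 r i (fun z => ξ z α) x := by
    intro α
    rw [show WFun ξ v α = fun y => ∑ i, v i * Jac ξ y i α from rfl]
    rw [fderiv_fun_sum (fun i _ =>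
      ((jac_entry_contDiff hξ i α).differentiable two_ne_zero x).const_mul (v i))]
    rw [ContinuousLinearMap.sum_apply]
    refine Finset.sum_congr rfl fun i _ => ?_
    rw [fderiv_const_mul ((jac_entry_contDiff hξ i α).differentiable two_ne_zero x) (v i)]
    rw [ContinuousLinearMap.smul_apply, smul_eq_mul, fderiv_eq_sum_pd, Finset.mul_sum]
    refine Finset.sum_congr rfl fun r _ => ?_
    show v i * (v r * pd2 r i (fun z => ξ z α) x) = _
    ring
  -- Step A: contract r, r' into directional second derivatives
  have stepA : ∑ i, ∑ i', ∑ r, ∑ r',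
        pd2 r r' (fun y => Pmat ξ y i i') x * v i * v i' * v r * v r'
      = ∑ i, ∑ i', (v i * v i') *
          fderiv ℝ (fun y => fderiv ℝ (fun z => Pmat ξ z i i') y v) x v := by
    refine Finset.sum_congr rfl fun i _ => Finset.sum_congr rfl fun i' _ => ?_
    rw [← sum_pd2_eq_D2 (Pmat_entry_contDiffAt hξ hrank i i'), Finset.mul_sum]
    refine Finset.sum_congr rfl fun r _ => ?_
    rw [Finset.mul_sum]
    refine Finset.sum_congr rfl fun r' _ => ?_
    ring
  -- Step A2: combine into a single function
  have stepA2 : fderiv ℝ (fun y => fderiv ℝ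
        (fun z => (0:ℝ) + ∑ p : Fin n × Fin n, (v p.1 * v p.2) * Pmat ξ z p.1 p.2) y v) x v
      = ∑ i, ∑ i', (v i * v i') *
          fderiv ℝ (fun y => fderiv ℝ (fun z => Pmat ξ z i i') y v) x v := by
    rw [fderiv2_comb Finset.univ 0 (fun p : Fin n × Fin n => v p.1 * v p.2)
      (fun p => fun z => Pmat ξ z p.1 p.2)
      (fun p _ => Pmat_entry_contDiffAt hξ hrank p.1 p.2) v v]
    rw [Fintype.sum_prod_type]
  -- Step B: rewrite the combined function
  have hfun : (fun z => (0:ℝ) + ∑ p : Fin n × Fin n, (v p.1 * v p.2) * Pmat ξ z p.1 p.2)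
      = (fun z => (∑ p : Fin n × Fin n, (v p.1 * v p.2) * (if p.1 = p.2 then (1:ℝ) else 0))
          + ∑ q : Fin m × Fin m, (-1 : ℝ) *
            (WFun ξ v q.1 z * bFun ξ q.1 q.2 z * WFun ξ v q.2 z)) := by
    funext z
    rw [zero_add]
    simp only [Pmat_entry, mul_sub, Finset.sum_sub_distrib]
    have core : ∑ p : Fin n × Fin n, (v p.1 * v p.2) *
          (∑ α', (∑ α, Jac ξ z p.1 α * bFun ξ α α' z) * Jac ξ z p.2 α')
        = ∑ q : Fin m × Fin m, WFun ξ v q.1 z * bFun ξ q.1 q.2 z * WFun ξ v q.2 z := by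
      rw [Fintype.sum_prod_type, Fintype.sum_prod_type]
      simp only [WFun, Finset.sum_mul, Finset.mul_sum]
      -- lhs order (i, i', α', α) → (α, α', i, i')
      conv_lhs => enter [2, i, 2, i']; rw [Finset.sum_comm]
      conv_lhs => enter [2, i]; rw [Finset.sum_comm]
      conv_lhs => rw [Finset.sum_comm]
      conv_lhs => enter [2, a, 2, b]; rw [Finset.sum_comm]
      conv_lhs => enter [2, a]; rw [Finset.sum_comm]
      conv_lhs => enter [2, a, 2, b]; rw [Finset.sum_comm]
      refine Finset.sum_congr rfl fun α _ => Finset.sum_congr rfl fun α' _ => ?_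
      refine Finset.sum_congr rfl fun i _ => Finset.sum_congr rfl fun i' _ => ?_
      ring
    rw [core]
    simp only [neg_one_mul, Finset.sum_neg_distrib, sub_eq_add_neg]
  -- Step C: second derivative of the combined function
  have stepC : fderiv ℝ (fun y => fderiv ℝ
        (fun z => (∑ p : Fin n × Fin n, (v p.1 * v p.2) * (if p.1 = p.2 then (1:ℝ) else 0))
          + ∑ q : Fin m × Fin m, (-1 : ℝ) *
            (WFun ξ v q.1 z * bFun ξ q.1 q.2 z * WFun ξ v q.2 z)) y v) x v
      = ∑ q : Fin m × Fin m, (-1 : ℝ) *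
          fderiv ℝ (fun y => fderiv ℝ
            (fun z => WFun ξ v q.1 z * bFun ξ q.1 q.2 z * WFun ξ v q.2 z) y v) x v :=
    fderiv2_comb Finset.univ _ _ _
      (fun q _ => ((hW2 q.1).mul (hb2 q.1 q.2)).mul (hW2 q.2)) v v
  -- Step D: evaluate each second derivative
  have stepD : ∀ q : Fin m × Fin m,
      fderiv ℝ (fun y => fderiv ℝ
        (fun z => WFun ξ v q.1 z * bFun ξ q.1 q.2 z * WFun ξ v q.2 z) y v) x v
      = 2 * ((∑ i, ∑ r, v i * v r * pd2 r i (fun z => ξ z q.1) x) * bFun ξ q.1 q.2 x *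
          (∑ i, ∑ r, v i * v r * pd2 r i (fun z => ξ z q.2) x)) := by
    intro q
    rw [fderiv2_mul3 (hW2 q.1) (hb2 q.1 q.2) (hW2 q.2) (hW0 q.1) (hW0 q.2), hdW, hdW]
  -- assemble left side
  rw [stepA, ← stepA2, hfun, stepC]
  simp only [stepD]
  -- swap derivative indices inside inner sums
  have hswap : ∀ α : Fin m, ∑ i, ∑ r, v i * v r * pd2 r i (fun z => ξ z α) x
      = ∑ i, ∑ r, v i * v r * pd2 i r (fun z => ξ z α) x := by
    intro α
    rw [Finset.sum_comm]
    refine Finset.sum_congr rfl fun i _ => Finset.sum_congr rfl fun r _ => ?_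
    ring
  simp only [hswap]
  -- right side: rewrite inverse and reorder sums
  simp only [bFun_eq_inv]
  rw [reorder6 (fun i i' r r' α α' => pd2 i r (fun y => ξ y α) x * bFun ξ α α' x *
    pd2 i' r' (fun y => ξ y α') x * v i * v i' * v r * v r')]
  rw [Fintype.sum_prod_type, Finset.mul_sum]
  refine Finset.sum_congr rfl fun α _ => ?_
  rw [Finset.mul_sum]
  refine Finset.sum_congr rfl fun α' _ => ?_
  rw [show (-1 : ℝ) * (2 * ((∑ i, ∑ r, v i * v r * pd2 i r (fun z => ξ z α) x)
      * bFun ξ α α' x * (∑ i, ∑ r, v i * v r * pd2 i r (fun z => ξ z α') x)))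
    = -2 * ((∑ i, ∑ r, v i * v r * pd2 i r (fun z => ξ z α) x)
      * bFun ξ α α' x * (∑ i, ∑ r, v i * v r * pd2 i r (fun z => ξ z α') x)) by ring]
  rw [Finset.mul_sum]
  simp only [Finset.sum_mul, Finset.mul_sum]
  refine Finset.sum_congr rfl fun i _ => ?_
  refine Finset.sum_congr rfl fun r _ => ?_
  refine Finset.sum_congr rfl fun i' _ => ?_
  refine Finset.sum_congr rfl fun r' _ => ?_
  ring
end

section
/- Let ξ: ℝⁿ → ℝ^{n-d} be smooth with full-rank Jacobian at x ∈ M. Consider the implicitly defined map c(x') ∈ ℝ^{n-d} solving ξ(x' + ∇ξ(x)c(x')) = 0 with c(x) = 0. Then for 1 ≤ η ≤ n−d and 1 ≤ j ≤ n, the first derivative satisfies ∂ⱼc_η(x) = −Σ_α (∇ξᵀ∇ξ)⁻¹_{ηα}(x) ∂ⱼξ_α(x); equivalently, δ_{rj} + Σ_η ∂ᵣξ_η(x)∂ⱼc_η(x) = P_{rj}(x). -/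
open Matrix

lemma pd_comp_proj {n m : ℕ} (f : (Fin n → ℝ) → Fin m → ℝ) (x : Fin n → ℝ)
    (hf : DifferentiableAt ℝ f x) (j : Fin n) (α : Fin m) :
    pd j (fun y => f y α) x = fderiv ℝ f x (Pi.single j 1) α := by
  have h : fderiv ℝ (fun y => f y α) x =
      (ContinuousLinearMap.proj (R := ℝ) (φ := fun _ : Fin m => ℝ) α).comp (fderiv ℝ f x) := by
    have := fderiv_comp (𝕜 := ℝ) (x := x)
      (ContinuousLinearMap.differentiableAt
        (ContinuousLinearMap.proj (R := ℝ) (φ := fun _ : Fin m => ℝ) α)) hf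
    rw [ContinuousLinearMap.fderiv] at this; exact this
  rw [pd, h]; rfl

lemma vec_sum_single {n : ℕ} (v : Fin n → ℝ) :
    ∑ i, v i • (Pi.single i 1 : Fin n → ℝ) = v := by
  funext k
  simp [Finset.sum_apply, Pi.single_apply]

theorem implicit_projection_first_derivative {n m : ℕ}
    (ξ : (Fin n → ℝ) → Fin m → ℝ) (x : Fin n → ℝ)
    (hξ : ContDiff ℝ (⊤ : ℕ∞) ξ) (hx : ξ x = 0)
    (hrank : IsUnit ((Jac ξ x)ᵀ * Jac ξ x).det)
    (c : (Fin n → ℝ) → Fin m → ℝ) (hc0 : c x = 0)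
    (hcdiff : ContDiffAt ℝ 1 c x)
    (hconstr : ∀ᶠ y in nhds x, ξ (y + (Jac ξ x).mulVec (c y)) = 0) :
    (∀ η j, pd j (fun y => c y η) x =
        -∑ α, ((Jac ξ x)ᵀ * Jac ξ x)⁻¹ η α * Jac ξ x j α) ∧
      ∀ r j, (if r = j then (1 : ℝ) else 0) +
          ∑ η, Jac ξ x r η * pd j (fun y => c y η) x = Pmat ξ x r j := by
  classical
  have hξd : Differentiable ℝ ξ := hξ.differentiable (by simp)
  have hcd : DifferentiableAt ℝ c x := hcdiff.differentiableAt one_ne_zero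
  set G := Jac ξ x with hGdef
  set A := Gᵀ * G with hAdef
  set Dξ := fderiv ℝ ξ x with hDξdef
  set Dc := fderiv ℝ c x with hDcdef
  have hGD : ∀ (i : Fin n) (α : Fin m), G i α = Dξ (Pi.single i 1) α := by
    intro i α
    exact pd_comp_proj ξ x (hξd x) i α
  have hDlin : ∀ (v : Fin n → ℝ) (α : Fin m), Dξ v α = ∑ i, v i * G i α := by
    intro v α
    conv_lhs => rw [← vec_sum_single v]
    rw [map_sum, Finset.sum_apply]
    refine Finset.sum_congr rfl fun i _ => ?_
    rw [_root_.map_smul, Pi.smul_apply, smul_eq_mul, ← hGD i α]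
  -- chain rule
  set M : (Fin m → ℝ) →L[ℝ] (Fin n → ℝ) :=
    LinearMap.toContinuousLinearMap (Matrix.mulVecLin G) with hMdef
  have hMapp : ∀ v, M v = G.mulVec v := fun v => rfl
  have hM : HasFDerivAt (fun y => G.mulVec (c y)) (M.comp Dc) x := by
    have h1 := M.hasFDerivAt (x := c x)
    have h2 := h1.comp x hcd.hasFDerivAt
    simpa [Function.comp, hMapp] using h2
  have hφ : HasFDerivAt (fun y => y + G.mulVec (c y))
      (ContinuousLinearMap.id ℝ (Fin n → ℝ) + M.comp Dc) x :=
    (hasFDerivAt_id x).add hM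
  have hφx : x + G.mulVec (c x) = x := by simp [hc0]
  have hξat : HasFDerivAt ξ Dξ (x + G.mulVec (c x)) := by
    rw [hφx]; exact (hξd x).hasFDerivAt
  have hcomp :
      HasFDerivAt (fun y => ξ (y + G.mulVec (c y)))
        (Dξ.comp (ContinuousLinearMap.id ℝ (Fin n → ℝ) + M.comp Dc)) x := by
    simpa [Function.comp] using hξat.comp x hφ
  have hzero : Dξ.comp (ContinuousLinearMap.id ℝ (Fin n → ℝ) + M.comp Dc) = 0 := by
    have heq : (fun _ : Fin n → ℝ => (0 : Fin m → ℝ)) =ᶠ[nhds x]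
        (fun y => ξ (y + G.mulVec (c y))) := hconstr.mono fun y hy => hy.symm
    have h0 := hcomp.congr_of_eventuallyEq heq
    exact h0.unique (hasFDerivAt_const 0 x)
  set w : Fin n → Fin m → ℝ := fun j => Dc (Pi.single j 1) with hwdef
  have hkey : ∀ (j : Fin n) (α : Fin m),
      Dξ (Pi.single j 1) α + Dξ (G.mulVec (w j)) α = 0 := by
    intro j α
    have h := DFunLike.congr_fun hzero (Pi.single j 1)
    have h2 := congrFun h α
    simpa [ContinuousLinearMap.comp_apply, ContinuousLinearMap.add_apply, hMapp,
      map_add, Pi.add_apply] using h2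
  have hAw : ∀ j : Fin n, A.mulVec (w j) = fun α => -(G j α) := by
    intro j
    funext α
    have h := hkey j α
    rw [← hGD j α, hDlin] at h
    have hrw : A.mulVec (w j) α = ∑ i, (G.mulVec (w j)) i * G i α := by
      simp only [hAdef, Matrix.mulVec, dotProduct, Matrix.mul_apply,
        Matrix.transpose_apply, Finset.sum_mul]
      rw [Finset.sum_comm]
      exact Finset.sum_congr rfl fun i _ => Finset.sum_congr rfl fun η _ => by ring
    rw [hrw]
    linarith
  have hw : ∀ j : Fin n, w j = fun η => -∑ α, A⁻¹ η α * G j α := by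
    intro j
    have hinv : A⁻¹ * A = 1 := Matrix.nonsing_inv_mul A hrank
    have : w j = A⁻¹.mulVec (A.mulVec (w j)) := by
      rw [Matrix.mulVec_mulVec, hinv, Matrix.one_mulVec]
    rw [this, hAw j]
    funext η
    simp [Matrix.mulVec, dotProduct, mul_neg, Finset.sum_neg_distrib]
  have hpd : ∀ (η : Fin m) (j : Fin n), pd j (fun y => c y η) x = w j η := by
    intro η j
    exact pd_comp_proj c x hcd j η
  have hfirst : ∀ (η : Fin m) (j : Fin n), pd j (fun y => c y η) x =
      -∑ α, A⁻¹ η α * G j α := by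
    intro η j
    rw [hpd η j, hw j]
  refine ⟨hfirst, ?_⟩
  intro r j
  simp only [hfirst]
  simp only [Pmat, ← hGdef, ← hAdef, Matrix.sub_apply, Matrix.one_apply, Matrix.mul_apply,
    Matrix.transpose_apply, mul_neg, Finset.sum_neg_distrib, Finset.mul_sum, Finset.sum_mul,
    sub_eq_add_neg]
  congr 1
  rw [neg_inj, Finset.sum_comm]
  exact Finset.sum_congr rfl fun α _ => Finset.sum_congr rfl fun η _ => by ring
end

section
/- In the setting of the implicit projection map c(x') solving ξ(x' + ∇ξ(x)c(x')) = 0 with c(x) = 0, the second derivatives satisfy ∂²_{jl}c_η(x) = −Σ_α Σ_{r,r'} (∇ξᵀ∇ξ)⁻¹_{ηα}(x) ∂²_{rr'}ξ_α(x) P_{rj}(x) P_{r'l}(x) for all 1 ≤ η ≤ n−d and 1 ≤ j,l ≤ n. -/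
open Matrix

/-- Expansion of a continuous linear map on `Fin n → ℝ` in the standard basis. -/
lemma clm_eval_sum {n : ℕ} {W : Type*} [NormedAddCommGroup W] [NormedSpace ℝ W]
    (T : (Fin n → ℝ) →L[ℝ] W) (v : Fin n → ℝ) :
    T v = ∑ r, v r • T (Pi.single r 1) := by
  have hv : v = ∑ r, v r • (Pi.single r 1 : Fin n → ℝ) := by
    funext i
    simp [Pi.single_apply]
  conv_lhs => rw [hv]
  rw [map_sum]
  simp

set_option maxHeartbeats 1600000 in
theorem implicit_projection_second_derivative {n m : ℕ}
    (ξ : (Fin n → ℝ) → Fin m → ℝ) (x : Fin n → ℝ)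
    (hξ : ContDiff ℝ 2 ξ) (hx : ξ x = 0)
    (hrank : IsUnit ((Jac ξ x)ᵀ * Jac ξ x).det)
    (c : (Fin n → ℝ) → Fin m → ℝ) (hc0 : c x = 0)
    (hcdiff : ContDiffAt ℝ 2 c x)
    (hconstr : ∀ᶠ y in nhds x, ξ (y + (Jac ξ x).mulVec (c y)) = 0) :
    ∀ η j l, pd2 j l (fun y => c y η) x =
      -∑ α, ∑ r, ∑ r', ((Jac ξ x)ᵀ * Jac ξ x)⁻¹ η α *
        pd2 r r' (fun y => ξ y α) x * Pmat ξ x r j * Pmat ξ x r' l := by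
  classical
  set G := Jac ξ x with hGdef
  set A := Gᵀ * G with hAdef
  set e : Fin n → (Fin n → ℝ) := fun r => Pi.single r 1 with hedef
  -- the multiplication-by-G continuous linear map
  set L : (Fin m → ℝ) →L[ℝ] (Fin n → ℝ) :=
    LinearMap.toContinuousLinearMap (Matrix.mulVecLin G) with hLdef
  have hLapp : ∀ v, L v = G.mulVec v := by
    intro v; simp [hLdef]
  -- componentwise smoothness of ξ
  have hξ2 : ∀ α, ContDiff ℝ 2 (fun y => ξ y α) := contDiff_pi.mp hξ
  -- c is C² eventually
  have hcd : ∀ᶠ y in nhds x, ContDiffAt ℝ 2 c y := hcdiff.eventually (by simp)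
  -- c is differentiable at x
  have hcdx : DifferentiableAt ℝ c x := hcdiff.differentiableAt (by norm_num)
  -- fderiv of c is differentiable at x
  have hDcC1 : ContDiffAt ℝ 1 (fderiv ℝ c) x := hcdiff.fderiv_right (by norm_num)
  have hDcdx : DifferentiableAt ℝ (fderiv ℝ c) x := hDcC1.differentiableAt (by norm_num)
  -- the shifted point map
  set φ : (Fin n → ℝ) → (Fin n → ℝ) := fun y => y + L (c y) with hφdef
  have hφx : φ x = x := by simp [hφdef, hc0]
  -- derivative of φ at points where c is differentiable
  have hφ' : ∀ y, DifferentiableAt ℝ c y →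
      HasFDerivAt φ (ContinuousLinearMap.id ℝ (Fin n → ℝ) + L.comp (fderiv ℝ c y)) y := by
    intro y hy
    exact (hasFDerivAt_id y).add (L.hasFDerivAt.comp y hy.hasFDerivAt)
  set Dφx : (Fin n → ℝ) →L[ℝ] (Fin n → ℝ) :=
    ContinuousLinearMap.id ℝ (Fin n → ℝ) + L.comp (fderiv ℝ c x) with hDφxdef
  have hDφxapp : ∀ v, Dφx v = v + G.mulVec (fderiv ℝ c x v) := by
    intro v; simp [hDφxdef, hLapp]
  -- the constraint, in terms of φ
  have hF0 : ∀ᶠ y in nhds x, ξ (φ y) = 0 := by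
    filter_upwards [hconstr] with y hy
    simpa [hφdef, hLapp] using hy
  -- first derivatives of the constraint vanish near x
  have hDF0 : ∀ α, ∀ᶠ y in nhds x, fderiv ℝ (fun z => ξ (φ z) α) y = 0 := by
    intro α
    filter_upwards [hF0.eventually_nhds] with y hy
    have hev : (fun z => ξ (φ z) α) =ᶠ[nhds y] (fun _ => (0 : ℝ)) := by
      filter_upwards [hy] with z hz
      simp [hz]
    rw [hev.fderiv_eq, fderiv_fun_const]
    rfl
  -- chain rule near x
  have hchain : ∀ᶠ y in nhds x, ∀ α,
      fderiv ℝ (fun z => ξ (φ z) α) y =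
        (fderiv ℝ (fun z => ξ z α) (φ y)).comp
          (ContinuousLinearMap.id ℝ (Fin n → ℝ) + L.comp (fderiv ℝ c y)) := by
    filter_upwards [hcd] with y hy α
    have h1 : HasFDerivAt φ (ContinuousLinearMap.id ℝ (Fin n → ℝ) + L.comp (fderiv ℝ c y)) y :=
      hφ' y (hy.differentiableAt (by norm_num))
    have h2 : HasFDerivAt (fun z => ξ z α) (fderiv ℝ (fun z => ξ z α) (φ y)) (φ y) :=
      (((hξ2 α).differentiable (by norm_num)) (φ y)).hasFDerivAt
    exact (h2.comp y h1).fderiv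
  -- the first-order identity at x
  have hfirst : ∀ α (v : Fin n → ℝ), fderiv ℝ (fun z => ξ z α) x (Dφx v) = 0 := by
    intro α v
    have h0 : fderiv ℝ (fun z => ξ (φ z) α) x = 0 := (hDF0 α).self_of_nhds
    have hch := hchain.self_of_nhds α
    rw [h0, hφx] at hch
    have := congrArg (fun (T : (Fin n → ℝ) →L[ℝ] ℝ) => T v) hch.symm
    simpa [hDφxdef] using this
  -- row expansion of the first derivative of ξ components
  have hGentry : ∀ (α : Fin m) (r : Fin n), fderiv ℝ (fun z => ξ z α) x (e r) = G r α := by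
    intro α r; rfl
  have hGrow : ∀ (α : Fin m) (v : Fin n → ℝ),
      fderiv ℝ (fun z => ξ z α) x v = ∑ r, v r * G r α := by
    intro α v
    rw [clm_eval_sum]
    exact Finset.sum_congr rfl fun r _ => by rw [hGentry]; simp
  -- Gᵀ kills the image of Dφx
  have hker : ∀ (v : Fin n → ℝ), Gᵀ.mulVec (Dφx v) = 0 := by
    intro v
    funext α
    have := hfirst α v
    rw [hGrow] at this
    simpa [Matrix.mulVec, dotProduct, Matrix.transpose_apply, mul_comm] using this
  -- solve for the first derivative of c
  have hDc1 : ∀ (v : Fin n → ℝ), fderiv ℝ c x v = -((A⁻¹ * Gᵀ).mulVec v) := by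
    intro v
    have h1 : Gᵀ.mulVec v + A.mulVec (fderiv ℝ c x v) = 0 := by
      have := hker v
      rw [hDφxapp] at this
      rw [hAdef]
      rw [Matrix.mulVec_add, Matrix.mulVec_mulVec] at this
      exact this
    have h2 : A.mulVec (fderiv ℝ c x v) = -(Gᵀ.mulVec v) := by
      have := congrArg (fun w => -(Gᵀ.mulVec v) + w) h1
      simpa [add_assoc] using this
    calc fderiv ℝ c x v = (A⁻¹ * A).mulVec (fderiv ℝ c x v) := by
              rw [Matrix.nonsing_inv_mul _ hrank, Matrix.one_mulVec]
      _ = A⁻¹.mulVec (A.mulVec (fderiv ℝ c x v)) := by rw [Matrix.mulVec_mulVec]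
      _ = A⁻¹.mulVec (-(Gᵀ.mulVec v)) := by rw [h2]
      _ = -((A⁻¹ * Gᵀ).mulVec v) := by rw [Matrix.mulVec_neg, Matrix.mulVec_mulVec]
  -- Dφx applied to basis vectors gives columns of P
  have hvP : ∀ r r0, Dφx (e r) r0 = Pmat ξ x r0 r := by
    intro r r0
    have : Dφx (e r) = (1 - G * ((Gᵀ * G)⁻¹) * Gᵀ).mulVec (e r) := by
      rw [hDφxapp, hDc1, Matrix.sub_mulVec, Matrix.one_mulVec, Matrix.mulVec_neg,
        Matrix.mul_assoc, Matrix.mulVec_mulVec, ← hAdef]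
      abel
    rw [this, hedef, Matrix.mulVec_single_one]
    rfl
  -- now fix j and l
  intro η j l
  -- second derivative as a bilinear object, for ξ components
  have hD2ξdiff : ∀ α, DifferentiableAt ℝ (fderiv ℝ (fun z => ξ z α)) x :=
    fun α => (((hξ2 α).contDiffAt).fderiv_right (n := 2) (m := 1) (by norm_num)).differentiableAt (by norm_num)
  set D2 : Fin m → ((Fin n → ℝ) →L[ℝ] (Fin n → ℝ) →L[ℝ] ℝ) :=
    fun α => fderiv ℝ (fderiv ℝ (fun z => ξ z α)) x with hD2def
  have hpd2ξ : ∀ (α : Fin m) (r r' : Fin n),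
      pd2 r r' (fun z => ξ z α) x = D2 α (e r) (e r') := by
    intro α r r'
    have h1 : HasFDerivAt (fun y => fderiv ℝ (fun z => ξ z α) y (e r'))
        (((fderiv ℝ (fun z => ξ z α) x).comp 0) + (D2 α).flip (e r')) x :=
      ((hD2ξdiff α).hasFDerivAt.clm_apply (hasFDerivAt_const (e r') x))
    have := h1.fderiv
    simp only [ContinuousLinearMap.comp_zero, zero_add] at this
    show fderiv ℝ (fun y => fderiv ℝ (fun z => ξ z α) y (e r')) x (e r) = _
    rw [this]
    rfl
  -- second derivative of c as a bilinear object
  set Dd : (Fin n → ℝ) →L[ℝ] (Fin n → ℝ) →L[ℝ] (Fin m → ℝ) :=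
    fderiv ℝ (fderiv ℝ c) x with hDddef
  set S : Fin m → ℝ := Dd (e j) (e l) with hSdef
  -- pd2 of components of c equals components of Dd
  have hpd2c : ∀ η', pd2 j l (fun y => c y η') x = S η' := by
    intro η'
    have hev : (fun y => fderiv ℝ (fun z => c z η') y (e l)) =ᶠ[nhds x]
        (fun y => fderiv ℝ c y (e l) η') := by
      filter_upwards [hcd] with y hy
      have hcy : DifferentiableAt ℝ c y := hy.differentiableAt (by norm_num)
      have : HasFDerivAt (fun z => c z η')
          ((ContinuousLinearMap.proj η').comp (fderiv ℝ c y)) y :=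
        (ContinuousLinearMap.proj η' : (Fin m → ℝ) →L[ℝ] ℝ).hasFDerivAt.comp y hcy.hasFDerivAt
      rw [this.fderiv]
      rfl
    have h1 : HasFDerivAt (fun y => fderiv ℝ c y (e l))
        (((fderiv ℝ c x).comp (0 : (Fin n → ℝ) →L[ℝ] (Fin n → ℝ))) + Dd.flip (e l)) x :=
      (hDcdx.hasFDerivAt.clm_apply (hasFDerivAt_const (e l) x))
    have h2 : HasFDerivAt (fun y => fderiv ℝ c y (e l) η')
        ((ContinuousLinearMap.proj η').comp (((fderiv ℝ c x).comp (0 : (Fin n → ℝ) →L[ℝ] (Fin n → ℝ))) + Dd.flip (e l))) x :=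
      (ContinuousLinearMap.proj η' : (Fin m → ℝ) →L[ℝ] ℝ).hasFDerivAt.comp x h1
    show fderiv ℝ (fun y => fderiv ℝ (fun z => c z η') y (e l)) x (e j) = S η'
    rw [hev.fderiv_eq, h2.fderiv]
    simp [hSdef]
  -- the second-order identity, for each α
  have hsecond : ∀ α : Fin m,
      (D2 α (Dφx (e j))) (Dφx (e l)) + fderiv ℝ (fun z => ξ z α) x (L S) = 0 := by
    intro α
    -- the function g which is eventually 0
    set g : (Fin n → ℝ) → ℝ :=
      fun y => fderiv ℝ (fun z => ξ z α) (φ y) (e l + L (fderiv ℝ c y (e l))) with hgdef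
    have hg0 : g =ᶠ[nhds x] (fun _ => (0 : ℝ)) := by
      filter_upwards [hDF0 α, hchain] with y hy hch
      have := congrArg (fun (T : (Fin n → ℝ) →L[ℝ] ℝ) => T (e l)) ((hch α).symm.trans hy)
      simpa [hgdef] using this
    have hgD : fderiv ℝ g x = 0 := by
      rw [hg0.fderiv_eq, fderiv_fun_const]; rfl
    -- compute fderiv g x via the product rule
    have hcm : HasFDerivAt (fun y => fderiv ℝ (fun z => ξ z α) (φ y))
        ((D2 α).comp Dφx) x := by
      have h1 : HasFDerivAt φ Dφx x := hφ' x hcdx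
      have h2 : HasFDerivAt (fderiv ℝ (fun z => ξ z α)) (D2 α) (φ x) := by
        rw [hφx]; exact (hD2ξdiff α).hasFDerivAt
      exact h2.comp x h1
    have hu : HasFDerivAt (fun y => e l + L (fderiv ℝ c y (e l)))
        ((0 : (Fin n → ℝ) →L[ℝ] (Fin n → ℝ)) +
          L.comp (((fderiv ℝ c x).comp (0 : (Fin n → ℝ) →L[ℝ] (Fin n → ℝ))) + Dd.flip (e l))) x := by
      have h1 : HasFDerivAt (fun y => fderiv ℝ c y (e l))
          (((fderiv ℝ c x).comp (0 : (Fin n → ℝ) →L[ℝ] (Fin n → ℝ))) + Dd.flip (e l)) x :=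
        (hDcdx.hasFDerivAt.clm_apply (hasFDerivAt_const (e l) x))
      exact (hasFDerivAt_const (e l) x).add (L.hasFDerivAt.comp x h1)
    have hgader : HasFDerivAt g
        ((fderiv ℝ (fun z => ξ z α) (φ x)).comp
            ((0 : (Fin n → ℝ) →L[ℝ] (Fin n → ℝ)) +
              L.comp (((fderiv ℝ c x).comp (0 : (Fin n → ℝ) →L[ℝ] (Fin n → ℝ))) + Dd.flip (e l))) +
          ((D2 α).comp Dφx).flip (e l + L (fderiv ℝ c x (e l)))) x :=
      hcm.clm_apply hu
    have := congrArg (fun (T : (Fin n → ℝ) →L[ℝ] ℝ) => T (e j)) (hgader.fderiv.symm.trans hgD)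
    simp only [ContinuousLinearMap.add_apply, ContinuousLinearMap.coe_comp', Function.comp_apply,
      ContinuousLinearMap.zero_apply, ContinuousLinearMap.comp_zero,
      ContinuousLinearMap.flip_apply, ContinuousLinearMap.zero_comp, zero_add] at this
    rw [hφx] at this
    -- identify the pieces
    have hul : e l + L (fderiv ℝ c x (e l)) = Dφx (e l) := by
      rw [hDφxapp, hLapp]
    rw [hul] at this
    rw [hSdef]
    have : D2 α (Dφx (e j)) (Dφx (e l)) + fderiv ℝ (fun z => ξ z α) x (L (Dd (e j) (e l))) = 0 := by
      rw [add_comm]; convert this using 3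
    exact this
  -- turn the second-order identity into a matrix equation
  set T : Fin m → ℝ := fun α => ∑ r, ∑ r', pd2 r r' (fun z => ξ z α) x *
    Pmat ξ x r j * Pmat ξ x r' l with hTdef
  have hmatrixeq : A.mulVec S = -T := by
    funext α
    have h := hsecond α
    -- rewrite the second-derivative term
    have hbil : (D2 α (Dφx (e j))) (Dφx (e l)) = T α := by
      have hT : T α = ∑ r, ∑ r', pd2 r r' (fun z => ξ z α) x *
          Pmat ξ x r j * Pmat ξ x r' l := rfl
      rw [hT, clm_eval_sum (D2 α) (Dφx (e j)), ContinuousLinearMap.sum_apply]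
      refine Finset.sum_congr rfl fun r _ => ?_
      rw [ContinuousLinearMap.smul_apply, clm_eval_sum (D2 α (e r)) (Dφx (e l)),
        Finset.smul_sum]
      refine Finset.sum_congr rfl fun r' _ => ?_
      rw [hpd2ξ α r r', ← hvP j r, ← hvP l r']
      simp only [smul_eq_mul]
      ring
    -- rewrite the first-derivative term
    have hlin : fderiv ℝ (fun z => ξ z α) x (L S) = A.mulVec S α := by
      rw [hGrow, hLapp]
      rw [hAdef, ← Matrix.mulVec_mulVec]
      simp only [Matrix.mulVec, dotProduct, Matrix.transpose_apply]
      exact Finset.sum_congr rfl fun r _ => by ring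
    rw [hbil, hlin] at h
    have : A.mulVec S α = -(T α) := by linarith
    simpa using this
  -- solve for S
  have hS : S = -(A⁻¹.mulVec T) := by
    calc S = (A⁻¹ * A).mulVec S := by rw [Matrix.nonsing_inv_mul _ hrank, Matrix.one_mulVec]
      _ = A⁻¹.mulVec (A.mulVec S) := by rw [Matrix.mulVec_mulVec]
      _ = A⁻¹.mulVec (-T) := by rw [hmatrixeq]
      _ = -(A⁻¹.mulVec T) := by rw [Matrix.mulVec_neg]
  -- conclude
  rw [hpd2c η, hS]
  simp only [Pi.neg_apply, Matrix.mulVec, dotProduct, hTdef]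
  congr 1
  refine Finset.sum_congr rfl fun α _ => ?_
  rw [Finset.mul_sum]
  refine Finset.sum_congr rfl fun r _ => ?_
  rw [Finset.mul_sum]
  refine Finset.sum_congr rfl fun r' _ => ?_
  ring
end

section
/- Let S_i = QᵢᵀX_iQᵢ ∈ SO(10) where X_i is block diagonal with blocks A₀ (rotation by π/3) and I₂, and let Y ∈ ℝ^{10×10} be such that S_iᵀY is anti-symmetric. Then tr((S_i e^{S_iᵀY})³) = tr(S_i³) + O(|Y|²); i.e. the first-order term in Y of tr(S³) vanishes at S = S_i. -/
open Matrix Real Asymptotics Topology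

/-- The 2×2 rotation by angle `π/3`. -/
noncomputable def A0 : Matrix (Fin 2) (Fin 2) ℝ :=
  !![Real.cos (π / 3), Real.sin (π / 3); -Real.sin (π / 3), Real.cos (π / 3)]

/-- The 10×10 block diagonal matrix with `i` copies of `A0` followed by copies of `I₂`. -/
noncomputable def Xblock (i : ℕ) : Matrix (Fin 2 × Fin 5) (Fin 2 × Fin 5) ℝ :=
  Matrix.blockDiagonal fun b : Fin 5 => if (b : ℕ) < i then A0 else 1

section LocalInstances

attribute [local instance] Matrix.linftyOpNormedRing Matrix.linftyOpNormedAlgebra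

local notation "MM" => Matrix (Fin 2 × Fin 5) (Fin 2 × Fin 5) ℝ

/-- `tr((S e^{SᵀY})³) = tr(S³) + O(|Y|²)` as `Y → 0` along matrices `Y` with
`SᵀY` anti-symmetric, where `S = Qᵀ X_i Q`. -/
theorem trace_cube_first_order_vanishes (i : ℕ) (hi1 : 1 ≤ i) (hi5 : i ≤ 5)
    (Q : Matrix (Fin 2 × Fin 5) (Fin 2 × Fin 5) ℝ)
    (hQ : Qᵀ * Q = 1) (hQdet : Q.det = 1)
    (S : Matrix (Fin 2 × Fin 5) (Fin 2 × Fin 5) ℝ) (hS : S = Qᵀ * Xblock i * Q) :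
    (fun Y : Matrix (Fin 2 × Fin 5) (Fin 2 × Fin 5) ℝ =>
        ((S * NormedSpace.exp (Sᵀ * Y)) ^ 3).trace - (S ^ 3).trace) =O[
      𝓝[{Y : Matrix (Fin 2 × Fin 5) (Fin 2 × Fin 5) ℝ | (Sᵀ * Y)ᵀ = -(Sᵀ * Y)}] 0]
      (fun Y => ∑ a, ∑ b, Y a b ^ 2) := by
  classical
  haveI : CompleteSpace (Matrix (Fin 2 × Fin 5) (Fin 2 × Fin 5) ℝ) :=
    FiniteDimensional.complete ℝ _
  set sset := {Y : MM | (Sᵀ * Y)ᵀ = -(Sᵀ * Y)} with hsset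
  set l := 𝓝[sset] (0 : MM) with hl
  -- basic algebraic facts
  have hQQT : Q * Qᵀ = 1 := mul_eq_one_comm.mp hQ
  have hA0 : A0 ^ 3 = -1 := by
    have hc : Real.cos (π / 3) = 1 / 2 := Real.cos_pi_div_three
    have hs : Real.sin (π / 3) = Real.sqrt 3 / 2 := Real.sin_pi_div_three
    have h3 : Real.sqrt 3 ^ 2 = 3 := Real.sq_sqrt (by norm_num)
    rw [show (3 : ℕ) = 2 + 1 from rfl, pow_succ, pow_two, A0, hc, hs]
    ext a b
    fin_cases a <;> fin_cases b <;>
      simp [Matrix.mul_apply, Fin.sum_univ_two] <;>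
      first
        | linear_combination (-(3 : ℝ) / 8) * h3
        | linear_combination (-(Real.sqrt 3) / 8) * h3
        | linear_combination ((Real.sqrt 3) / 8) * h3
        | ring
  have hX3 : (Xblock i) ^ 3 =
      Matrix.blockDiagonal (fun b : Fin 5 =>
        if (b : ℕ) < i then (-1 : Matrix (Fin 2) (Fin 2) ℝ) else 1) := by
    rw [Xblock, ← Matrix.blockDiagonal_pow]
    refine congrArg Matrix.blockDiagonal ?_
    funext b
    by_cases hb : (b : ℕ) < i
    · simp [Pi.pow_apply, hb, hA0]
    · simp [Pi.pow_apply, hb]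
  have hX3T : ((Xblock i) ^ 3)ᵀ = (Xblock i) ^ 3 := by
    rw [hX3, Matrix.blockDiagonal_transpose]
    refine congrArg Matrix.blockDiagonal ?_
    funext b
    split_ifs <;> simp
  have hconj : ∀ A B : MM, (Qᵀ * A * Q) * (Qᵀ * B * Q) = Qᵀ * (A * B) * Q := by
    intro A B
    simp only [Matrix.mul_assoc]
    rw [← Matrix.mul_assoc Q Qᵀ (B * Q), hQQT, Matrix.one_mul]
  have hS3 : S ^ 3 = Qᵀ * ((Xblock i) ^ 3) * Q := by
    rw [hS, show (3 : ℕ) = 2 + 1 from rfl, pow_succ, pow_two, pow_succ, pow_two,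
      hconj, hconj]
  have hS3T : (S ^ 3)ᵀ = S ^ 3 := by
    rw [hS3]
    simp [Matrix.transpose_mul, Matrix.transpose_transpose, hX3T, Matrix.mul_assoc]
  have htr0 : ∀ Y : MM, Y ∈ sset → (S ^ 3 * (Sᵀ * Y)).trace = 0 := by
    intro Y hY
    have hYa : (Sᵀ * Y)ᵀ = -(Sᵀ * Y) := hY
    have h1 : ((S ^ 3 * (Sᵀ * Y))ᵀ).trace = (S ^ 3 * (Sᵀ * Y)).trace :=
      Matrix.trace_transpose _
    rw [Matrix.transpose_mul, hYa, hS3T, Matrix.neg_mul, Matrix.trace_neg,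
      Matrix.trace_mul_comm] at h1
    linarith
  -- the remainder of the exponential
  set E : MM → MM := fun Y => NormedSpace.exp (Sᵀ * Y) - (1 + Sᵀ * Y) with hE_def
  set D : MM → MM := fun Y => S * (Sᵀ * Y) + S * (E Y) with hD_def
  have hSexp : ∀ Y : MM, S * NormedSpace.exp (Sᵀ * Y) = S + D Y := by
    intro Y
    rw [hD_def, hE_def]
    noncomm_ring
  have hexpand : ∀ Dm : MM, ((S + Dm) ^ 3).trace - (S ^ 3).trace =
      3 * (S * S * Dm).trace + 3 * (S * Dm * Dm).trace + (Dm * Dm * Dm).trace := by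
    intro Dm
    have c1 : (S * Dm * S).trace = (S * S * Dm).trace := by
      rw [Matrix.trace_mul_cycle]
    have c2 : (Dm * S * S).trace = (S * S * Dm).trace := by
      rw [Matrix.trace_mul_cycle]; exact c1
    have c3 : (Dm * S * Dm).trace = (S * Dm * Dm).trace := by
      rw [Matrix.trace_mul_cycle]
      rw [Matrix.trace_mul_cycle]
    have c4 : (Dm * Dm * S).trace = (S * Dm * Dm).trace := by
      rw [Matrix.trace_mul_cycle]
    simp only [show (3 : ℕ) = 2 + 1 from rfl, pow_succ, pow_zero, one_mul, Matrix.add_mul,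
      Matrix.mul_add, Matrix.trace_add]
    rw [c1, c2, c3, c4]
    ring
  -- pointwise identity on the set
  have heq : (fun Y : MM =>
        ((S * NormedSpace.exp (Sᵀ * Y)) ^ 3).trace - (S ^ 3).trace) =ᶠ[l]
      (fun Y : MM => 3 * (S ^ 3 * (E Y)).trace + 3 * (S * (D Y) * (D Y)).trace
        + ((D Y) * (D Y) * (D Y)).trace) := by
    filter_upwards [self_mem_nhdsWithin] with Y hY
    have h2 : S * S * (D Y) = S ^ 3 * (Sᵀ * Y) + S ^ 3 * (E Y) := by
      rw [hD_def]
      noncomm_ring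
    rw [hSexp Y, hexpand (D Y), h2, Matrix.trace_add, htr0 Y hY]
    ring
  -- asymptotic bounds
  have hWO : (fun Y : MM => Sᵀ * Y) =O[l] (fun Y : MM => ‖Y‖) := by
    apply IsBigO.of_bound ‖Sᵀ‖
    filter_upwards with Y
    simpa using norm_mul_le Sᵀ Y
  have htend : Filter.Tendsto (fun Y : MM => Sᵀ * Y) l (𝓝 0) := by
    have hc : Continuous fun Y : MM => Sᵀ * Y :=
      continuous_const.matrix_mul continuous_id
    have h := (hc.tendsto (0 : MM)).mono_left (nhdsWithin_le_nhds (s := sset))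
    simpa using h
  have hE2 : E =O[l] (fun Y : MM => ‖Y‖ ^ 2) := by
    have hrad : 0 < (NormedSpace.expSeries ℝ MM).radius := by
      exact lt_of_lt_of_eq ENNReal.zero_lt_top (NormedSpace.expSeries_radius_eq_top ℝ MM).symm
    have hfps := NormedSpace.hasFPowerSeriesAt_exp_zero_of_radius_pos hrad
    have hO := hfps.isBigO_sub_partialSum_pow 2
    have hps : ∀ y : MM, (NormedSpace.expSeries ℝ MM).partialSum 2 y = 1 + y := by
      intro y
      simp [FormalMultilinearSeries.partialSum, Finset.sum_range_succ,
        NormedSpace.expSeries_apply_eq, Nat.factorial]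
    have hO' : (fun y : MM => NormedSpace.exp y - (1 + y)) =O[𝓝 0]
        (fun y : MM => ‖y‖ ^ 2) := by
      have : (fun y : MM => NormedSpace.exp (0 + y)
          - (NormedSpace.expSeries ℝ MM).partialSum 2 y)
          = fun y : MM => NormedSpace.exp y - (1 + y) := by
        funext y; rw [zero_add, hps y]
      exact hO.congr_left (congrFun this)
    have hcomp := hO'.comp_tendsto htend
    refine hcomp.trans ?_
    exact hWO.norm_left.pow 2
  have hobnd : ∀ᶠ Y : MM in l, ‖Y‖ ≤ 1 := by
    have h : ∀ᶠ Y : MM in 𝓝 0, ‖Y‖ ≤ 1 := by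
      filter_upwards [Metric.ball_mem_nhds (0 : MM) one_pos] with Y hY
      exact le_of_lt (mem_ball_zero_iff.mp hY)
    exact h.filter_mono nhdsWithin_le_nhds
  have h21 : (fun Y : MM => ‖Y‖ ^ 2) =O[l] (fun Y : MM => ‖Y‖) := by
    apply IsBigO.of_bound 1
    filter_upwards [hobnd] with Y h
    simp only [norm_pow, norm_norm, one_mul]
    nlinarith [norm_nonneg Y]
  have h32 : (fun Y : MM => ‖Y‖ ^ 3) =O[l] (fun Y : MM => ‖Y‖ ^ 2) := by
    apply IsBigO.of_bound 1
    filter_upwards [hobnd] with Y h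
    simp only [norm_pow, norm_norm, one_mul]
    nlinarith [norm_nonneg Y]
  have hDO : D =O[l] (fun Y : MM => ‖Y‖) := by
    rw [hD_def]
    exact (hWO.const_mul_left S).add ((hE2.const_mul_left S).trans h21)
  set T : MM →L[ℝ] ℝ :=
    LinearMap.toContinuousLinearMap (Matrix.traceLinearMap (Fin 2 × Fin 5) ℝ ℝ) with hT_def
  have hT : ∀ A : MM, T A = A.trace := fun A => rfl
  have t1 : (fun Y : MM => (S ^ 3 * (E Y)).trace) =O[l] (fun Y : MM => ‖Y‖ ^ 2) := by
    have h := (T.isBigO_comp (fun Y : MM => S ^ 3 * (E Y)) l).trans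
      (hE2.const_mul_left (S ^ 3))
    exact h
  have t2 : (fun Y : MM => (S * (D Y) * (D Y)).trace) =O[l] (fun Y : MM => ‖Y‖ ^ 2) := by
    have hDD : (fun Y : MM => S * (D Y) * (D Y)) =O[l] (fun Y : MM => ‖Y‖ * ‖Y‖) :=
      (hDO.const_mul_left S).mul hDO
    have hDD2 : (fun Y : MM => S * (D Y) * (D Y)) =O[l] (fun Y : MM => ‖Y‖ ^ 2) :=
      hDD.congr_right fun Y => by ring
    exact (T.isBigO_comp _ l).trans hDD2
  have t3 : (fun Y : MM => ((D Y) * (D Y) * (D Y)).trace) =O[l]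
      (fun Y : MM => ‖Y‖ ^ 2) := by
    have hDDD : (fun Y : MM => (D Y) * (D Y) * (D Y)) =O[l]
        (fun Y : MM => ‖Y‖ * ‖Y‖ * ‖Y‖) := (hDO.mul hDO).mul hDO
    have hDDD2 : (fun Y : MM => (D Y) * (D Y) * (D Y)) =O[l] (fun Y : MM => ‖Y‖ ^ 3) :=
      hDDD.congr_right fun Y => by ring
    exact (T.isBigO_comp _ l).trans (hDDD2.trans h32)
  have hG : (fun Y : MM => 3 * (S ^ 3 * (E Y)).trace + 3 * (S * (D Y) * (D Y)).trace
      + ((D Y) * (D Y) * (D Y)).trace) =O[l] (fun Y : MM => ‖Y‖ ^ 2) :=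
    ((t1.const_mul_left 3).add (t2.const_mul_left 3)).add t3
  -- compare `‖Y‖ ^ 2` with the sum of squares of entries
  have hnorm_sq : (fun Y : MM => ‖Y‖ ^ 2) =O[l] (fun Y : MM => ∑ a, ∑ b, Y a b ^ 2) := by
    let e : EuclideanSpace ℝ ((Fin 2 × Fin 5) × (Fin 2 × Fin 5)) →ₗ[ℝ] MM :=
      { toFun := fun x => Matrix.of fun a b => x (a, b)
        map_add' := fun x y => rfl
        map_smul' := fun c x => rfl }
    let L := LinearMap.toContinuousLinearMap e
    letI : SeminormedAddCommGroup (EuclideanSpace ℝ ((Fin 2 × Fin 5) × (Fin 2 × Fin 5)) →L[ℝ] MM) :=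
      ContinuousLinearMap.toSeminormedAddCommGroup
    have hLnorm : ∀ Y : MM, ‖Y‖ ≤ ‖L‖ * Real.sqrt (∑ a, ∑ b, Y a b ^ 2) := by
      intro Y
      set x : EuclideanSpace ℝ ((Fin 2 × Fin 5) × (Fin 2 × Fin 5)) :=
        WithLp.toLp 2 (fun p => Y p.1 p.2) with hx
      have h2 : ‖L x‖ ≤ ‖L‖ * ‖x‖ := L.le_opNorm x
      have h3 : ‖x‖ = Real.sqrt (∑ a, ∑ b, Y a b ^ 2) := by
        rw [EuclideanSpace.norm_eq]
        congr 1
        rw [Fintype.sum_prod_type]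
        simp [hx, Real.norm_eq_abs, sq_abs]
      have h1 : L x = Y := rfl
      calc ‖Y‖ = ‖L x‖ := by rw [h1]
        _ ≤ ‖L‖ * ‖x‖ := h2
        _ = ‖L‖ * Real.sqrt (∑ a, ∑ b, Y a b ^ 2) := by rw [h3]
    apply IsBigO.of_bound (‖L‖ ^ 2)
    filter_upwards with Y
    have hs : (0 : ℝ) ≤ ∑ a, ∑ b, Y a b ^ 2 := by positivity
    have h2 := hLnorm Y
    have h3 : ‖Y‖ ^ 2 ≤ (‖L‖ * Real.sqrt (∑ a, ∑ b, Y a b ^ 2)) ^ 2 :=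
      pow_le_pow_left₀ (norm_nonneg _) h2 2
    rw [mul_pow, Real.sq_sqrt hs] at h3
    have hY2 : (0 : ℝ) ≤ ‖Y‖ ^ 2 := by positivity
    simpa [Real.norm_eq_abs, abs_of_nonneg hs, abs_of_nonneg hY2] using h3
  exact heq.trans_isBigO (hG.trans hnorm_sq)

end LocalInstances
end
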